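/- arXiv:2304.04438 — 8 statements merged into one kernel-verified Lean document; each statement's English description precedes it below -/
import Mathlib

section
/- Let π be a group acting freely on a set X̃, let X be the set of orbits and p : X̃ → X the orbit map. Let f̄_1, …, f̄_n : X̃ → X̃ be functions such that p(f̄_i(x)) ≠ p(f̄_j(x)) for all x ∈ X̃ whenever i ≠ j. Suppose there are functions φ_1, …, φ_n : π → π and a map σ : π → Σ_n (the symmetric group on {1,…,n}) satisfying: (i) for all γ ∈ π, all i and all x ∈ X̃, f̄_i(γ·x) = φ_i(γ)·f̄_{σ_γ⁻¹(i)}(x); (ii) for all γ, δ ∈ π and all i, σ_{γδ} = σ_γ ∘ σ_δ and φ_i(γδ) = φ_i(γ)·φ_{σ_γ⁻¹(i)}(δ). Call a function of the form x ↦ α·f̄_i(x) with α ∈ π a lift-factor, and say two lift-factors α·f̄_i and β·f̄_j are equivalent if there exists γ ∈ π with α·f̄_i(x) = γ·β·f̄_j(γ⁻¹·x) for all x ∈ X̃. Writing Fix(g) = {x ∈ X̃ : g(x) = x}, the following hold: (a) if α·f̄_i and β·f̄_j are equivalent lift-factors, then p(Fix(α·f̄_i)) = p(Fix(β·f̄_j));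 (b) if p(Fix(α·f̄_i)) ∩ p(Fix(β·f̄_j)) ≠ ∅, then α·f̄_i and β·f̄_j are equivalent. -/
/-- set-theoretic content of Theorem 2.1 of the paper.
A group `π` acts freely on `X̃`; `p : X̃ → X` is the orbit map (here `X` is the quotient of
`X̃` by the orbit relation).  The `f i : X̃ → X̃` are the lift-factors of a basic lifting of an
`n`-valued map, with associated data `(φ₁,…,φₙ; σ)` coming from the homomorphism
`ψ_f : π → πⁿ ⋊ Σₙ`.  Two lift-factors `α·f i` and `β·f j` are equivalent when
`∃ γ ∈ π, ∀ x, α·f i (x) = γ·β·f j (γ⁻¹·x)`.  Then: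
(a) equivalent lift-factors have the same image under `p` of their fixed point sets, and
(b) if those images intersect, the lift-factors are equivalent. -/
theorem lift_factor_classes_fixed_point_classes
    {π X : Type*} [Group π] [MulAction π X]
    (hfree : ∀ (γ : π) (x : X), γ • x = x → γ = 1)
    (n : ℕ) (f : Fin n → X → X)
    (hdisj : ∀ (x : X) (i j : Fin n), i ≠ j →
      Quotient.mk (MulAction.orbitRel π X) (f i x) ≠ Quotient.mk (MulAction.orbitRel π X) (f j x))
    (φ : Fin n → π → π) (σ : π → Equiv.Perm (Fin n))
    (hlift : ∀ (γ : π) (i : Fin n) (x : X), f i (γ • x) = φ i γ • f ((σ γ)⁻¹ i) x)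
    (hσ : ∀ γ δ : π, σ (γ * δ) = σ γ * σ δ)
    (hφ : ∀ (γ δ : π) (i : Fin n), φ i (γ * δ) = φ i γ * φ ((σ γ)⁻¹ i) δ)
    (α β : π) (i j : Fin n) :
    ((∃ γ : π, ∀ x : X, α • f i x = γ • β • f j (γ⁻¹ • x)) →
      Quotient.mk (MulAction.orbitRel π X) '' {x : X | α • f i x = x}
        = Quotient.mk (MulAction.orbitRel π X) '' {x : X | β • f j x = x}) ∧
    ((Quotient.mk (MulAction.orbitRel π X) '' {x : X | α • f i x = x} ∩
        Quotient.mk (MulAction.orbitRel π X) '' {x : X | β • f j x = x}).Nonempty →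
      ∃ γ : π, ∀ x : X, α • f i x = γ • β • f j (γ⁻¹ • x)) := by
  constructor
  · rintro ⟨γ, hγ⟩
    ext q
    simp only [Set.mem_image, Set.mem_setOf_eq]
    constructor
    · rintro ⟨x, hx, rfl⟩
      refine ⟨γ⁻¹ • x, ?_, Quotient.sound (MulAction.mem_orbit x γ⁻¹)⟩
      have h := hγ x
      rw [hx] at h
      rw [← smul_left_cancel_iff γ, smul_inv_smul]
      exact h.symm
    · rintro ⟨y, hy, rfl⟩
      refine ⟨γ • y, ?_, Quotient.sound ?_⟩
      · rw [hγ (γ • y), inv_smul_smul, hy]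
      · exact MulAction.mem_orbit y γ
  · rintro ⟨q, ⟨x, hx, hqx⟩, ⟨y, hy, hqy⟩⟩
    have hxy : x ∈ MulAction.orbit π y := Quotient.exact (hqx.trans hqy.symm)
    obtain ⟨δ, hδ⟩ := hxy
    have hyx : y = δ⁻¹ • x := by rw [← hδ, inv_smul_smul]
    set k : Fin n := (σ δ⁻¹)⁻¹ j with hk
    have hfjy : β • φ j δ⁻¹ • f k x = δ⁻¹ • x := by
      have := hlift δ⁻¹ j x
      rw [← hyx] at this
      rw [← this, hy, hyx]
    have hfix : f i x = α⁻¹ • x := eq_inv_smul_iff.mpr hx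
    have h1 : f k x = (φ j δ⁻¹)⁻¹ • β⁻¹ • δ⁻¹ • x := by
      rw [← hfjy, inv_smul_smul, inv_smul_smul]
    have hki : k = i := by
      by_contra hne
      apply hdisj x k i hne
      have e1 : Quotient.mk (MulAction.orbitRel π X) (f k x)
          = Quotient.mk (MulAction.orbitRel π X) x :=
        Quotient.sound ⟨(φ j δ⁻¹)⁻¹ * β⁻¹ * δ⁻¹, by show ((φ j δ⁻¹)⁻¹ * β⁻¹ * δ⁻¹) • x = f k x; rw [mul_smul, mul_smul]; exact h1.symm⟩
      have e2 : Quotient.mk (MulAction.orbitRel π X) (f i x)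
          = Quotient.mk (MulAction.orbitRel π X) x :=
        Quotient.sound ⟨α⁻¹, hfix.symm⟩
      exact e1.trans e2.symm
    rw [hki] at h1
    have hone : (α * ((φ j δ⁻¹)⁻¹ * β⁻¹ * δ⁻¹)) = 1 := by
      apply hfree _ x
      rw [mul_smul, mul_smul, mul_smul, ← h1, hfix, smul_inv_smul]
    have hα : δ * β * φ j δ⁻¹ = α := by
      have h2 : (φ j δ⁻¹)⁻¹ * β⁻¹ * δ⁻¹ = α⁻¹ := (inv_eq_of_mul_eq_one_right hone).symm
      calc δ * β * φ j δ⁻¹ = ((φ j δ⁻¹)⁻¹ * β⁻¹ * δ⁻¹)⁻¹ := by group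
        _ = α := by rw [h2, inv_inv]
    refine ⟨δ, fun z => ?_⟩
    rw [hlift δ⁻¹ j z, ← hk, hki, smul_smul, smul_smul, hα]
end

section
/- Let N be a finitely generated torsion-free nilpotent group of nilpotency class c and let H be a finite-index subgroup of N. For each i ∈ {1,…,c+1} set N_i = √[N]{γ_i(N)} and H_i = √[H]{γ_i(H)}. Then for every i: (1) H_i = H ∩ N_i; (2) H_i has finite index in N_i; (3) there is a group isomorphism H_i/H_{i+1} ≅ H_i N_{i+1}/N_{i+1} induced by h·H_{i+1} ↦ h·N_{i+1}. -/
/-- Paper's `N_i = √[N]{γ_i(N)}` (1-indexed): the isolator in `N` of the `i`-th term of the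
lower central series of `N`.  (Mathlib's `lowerCentralSeries N (i-1)` is the paper's `γ_i(N)`.) -/
def isolatorLCS (N : Type*) [Group N] (i : ℕ) : Set N :=
  {x : N | ∃ m : ℕ, 1 ≤ m ∧ x ^ m ∈ (⊤ : Subgroup N).lowerCentralSeries (i - 1)}

/-- Paper's `H_i = √[H]{γ_i(H)}` for a subgroup `H ≤ N`, viewed as a subset of `N`:
the isolator, taken inside `H`, of the `i`-th term of the lower central series of `H`. -/
def isolatorLCSSubgroup {N : Type*} [Group N] (H : Subgroup N) (i : ℕ) : Set N :=
  {x : N | ∃ hx : x ∈ H, ∃ m : ℕ, 1 ≤ m ∧ (⟨x, hx⟩ : H) ^ m ∈ (⊤ : Subgroup H).lowerCentralSeries (i - 1)}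

/-- Old Mathlib's `Monoid.IsTorsionFree` (removed since): no nontrivial element has finite order. -/
def Monoid.IsTorsionFree (G : Type*) [Monoid G] : Prop :=
  ∀ g : G, g ≠ 1 → ¬IsOfFinOrder g

/-!
The substance is `H ∩ N_i ⊆ H_i`. Passing to the normal core we may take `H` normal, of index
`e`, and show `γ_n(N) ⊆ √γ_n(H)` by induction on `n`. If `y ∈ γ_j(N)` (`j ≥ n`) has
`y ^ a ∈ γ_n(H)`, then `⁅y, g⁆ ^ (a * e)` agrees with `⁅y ^ a, g ^ e⁆ ∈ γ_{n+1}(H)` modulo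
`γ_{j+2}(N)`; a downward induction on `j`, which terminates since `N` is nilpotent, gives
`γ_{j+1}(N) ⊆ √γ_{n+1}(H)`.

This needs isolators of normal subgroups to be subgroups, i.e. torsion elements of a nilpotent
group to form a subgroup. That holds because a nilpotent group generated by finitely many torsion
elements is finite: by induction `G ⧸ Z(G)` is finite, so by Schur's argument `[G, G]` is finite,
and `G ⧸ [G, G]` is a finitely generated abelian torsion group.

Then `H_i = H ∩ N_i` has finite index in `N_i`, and `H_i ⧸ H_{i+1} = H_i ⧸ (H_i ∩ N_{i+1})` is
`H_i N_{i+1} ⧸ N_{i+1}` by the second isomorphism theorem.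
-/

open Subgroup
open scoped commutatorElement

section Torsion

lemma closure_image_eq_top_of_surjective {G G' : Type*} [Group G] [Group G'] {f : G →* G'}
    (hf : Function.Surjective f) {S : Set G} (hS : closure S = ⊤) : closure (f '' S) = ⊤ := by
  rw [← MonoidHom.map_closure, hS, map_top_of_surjective f hf]

lemma CommGroup.finite_of_closure_eq_top {G : Type*} [CommGroup G] {S : Set G} (hS : S.Finite)
    (htor : ∀ s ∈ S, IsOfFinOrder s) (hgen : closure S = ⊤) : Finite G := by
  have : Group.FG G := Group.fg_iff.mpr ⟨S, hgen, hS⟩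
  refine CommGroup.finite_of_fg_isMulTorsion G fun g => ?_
  have hle : closure S ≤ CommGroup.torsion G := (closure_le _).mpr htor
  exact hle (hgen ▸ mem_top g)

variable {G : Type*} [Group G]

lemma commutatorElement_mul_mul_of_mem_center {a b z w : G} (hz : z ∈ center G)
    (hw : w ∈ center G) : ⁅a * z, b * w⁆ = ⁅a, b⁆ := by
  rw [mem_center_iff] at hz hw
  calc ⁅a * z, b * w⁆ = a * (z * (b * w)) * z⁻¹ * a⁻¹ * w⁻¹ * b⁻¹ := by
        rw [commutatorElement_def]; group
    _ = a * b * (w * a⁻¹) * w⁻¹ * b⁻¹ := by rw [← hz]; group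
    _ = ⁅a, b⁆ := by rw [← hw, commutatorElement_def]; group

instance finite_commutatorSet_of_finiteIndex_center [(center G).FiniteIndex] :
    Finite (commutatorSet G) := by
  have : Finite (G ⧸ center G) := finite_quotient_of_finiteIndex
  refine Set.Finite.to_subtype <| (Set.finite_range fun p : (G ⧸ center G) × (G ⧸ center G) =>
    ⁅p.1.out, p.2.out⁆).subset ?_
  rintro _ ⟨a, b, rfl⟩
  obtain ⟨z, hz⟩ := QuotientGroup.mk_out_eq_mul (center G) a
  obtain ⟨w, hw⟩ := QuotientGroup.mk_out_eq_mul (center G) b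
  exact ⟨(a, b), by simp only [hz, hw, commutatorElement_mul_mul_of_mem_center z.2 w.2]⟩

theorem Group.IsNilpotent.finite_of_closure_eq_top [Group.IsNilpotent G] {S : Set G}
    (hS : S.Finite) (htor : ∀ s ∈ S, IsOfFinOrder s) (hgen : closure S = ⊤) : Finite G := by
  refine (Group.nilpotent_center_quotient_ind (P := fun G _ _ => ∀ S : Set G, S.Finite →
    (∀ s ∈ S, IsOfFinOrder s) → closure S = ⊤ → Finite G) G
    (fun _ _ _ _ _ _ _ => Finite.of_subsingleton) fun G _ _ ih S hS htor hgen => ?_) S hS htor hgen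
  have htor_image {G' : Type _} [Group G'] (f : G →* G') : ∀ s ∈ f '' S, IsOfFinOrder s := by
    rintro _ ⟨s, hs, rfl⟩
    exact f.isOfFinOrder (htor s hs)
  have : Finite (G ⧸ center G) := ih _ (hS.image _) (htor_image (QuotientGroup.mk' _))
    (closure_image_eq_top_of_surjective (QuotientGroup.mk'_surjective _) hgen)
  have : (center G).FiniteIndex := finiteIndex_of_finite_quotient
  have : Finite (Abelianization G) := CommGroup.finite_of_closure_eq_top (hS.image _)
    (htor_image Abelianization.of)
    (closure_image_eq_top_of_surjective (QuotientGroup.mk'_surjective _) hgen)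
  have : Finite (G ⧸ commutator G) := this
  exact Finite.of_subgroup_quotient (commutator G)

theorem Group.IsNilpotent.isOfFinOrder_mul [Group.IsNilpotent G] {x y : G}
    (hx : IsOfFinOrder x) (hy : IsOfFinOrder y) : IsOfFinOrder (x * y) := by
  set K := closure ({x, y} : Set G)
  have : Finite K := by
    refine Group.IsNilpotent.finite_of_closure_eq_top
      ((Set.toFinite {x, y}).preimage K.subtype_injective.injOn) ?_ (closure_preimage_eq_top _)
    rintro s (hs | hs) <;>
      rw [← K.subtype_injective.isOfFinOrder_iff] <;> simp_all
  have hxy : x * y ∈ K := mul_mem (subset_closure (by simp)) (subset_closure (by simp))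
  exact K.subtype_injective.isOfFinOrder_iff.mpr (isOfFinOrder_of_finite ⟨x * y, hxy⟩)

end Torsion

namespace Subgroup

variable {G : Type*} [Group G] [Group.IsNilpotent G]

def isolator (K : Subgroup G) [K.Normal] : Subgroup G where
  carrier := {x | IsOfFinOrder (x : G ⧸ K)}
  one_mem' := IsOfFinOrder.one
  mul_mem' hx hy := Group.IsNilpotent.isOfFinOrder_mul hx hy
  inv_mem' hx := hx.inv

variable {K : Subgroup G} [K.Normal]

theorem mem_isolator_iff {x : G} : x ∈ K.isolator ↔ ∃ m, 0 < m ∧ x ^ m ∈ K := by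
  change IsOfFinOrder (x : G ⧸ K) ↔ _
  simp only [isOfFinOrder_iff_pow_eq_one, ← QuotientGroup.mk_pow, QuotientGroup.eq_one_iff]

theorem le_isolator : K ≤ K.isolator := fun x hx => mem_isolator_iff.mpr ⟨1, one_pos, by simpa⟩

theorem mem_isolator_of_pow_mem {x : G} {m : ℕ} (hm : m ≠ 0) (h : x ^ m ∈ K.isolator) :
    x ∈ K.isolator := by
  have h' : IsOfFinOrder ((x : G ⧸ K) ^ m) := h
  exact h'.of_pow hm

end Subgroup

section Commutator

variable {G : Type*} [Group G]

lemma commutatorElement_pow_left_of_commute {y c : G} (h : ∀ z, Commute ⁅y, c⁆ z) (a : ℕ) :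
    ⁅y ^ a, c⁆ = ⁅y, c⁆ ^ a := by
  induction a with
  | zero => simp
  | succ a ih =>
    rw [pow_succ', commutatorElement_mul_left_eq_conj_mul, ih, ← ((h y).pow_left a).eq,
      mul_inv_cancel_right, pow_succ]

lemma commutatorElement_pow_right_of_commute {y g : G} (h : ∀ z, Commute ⁅y, g⁆ z) (e : ℕ) :
    ⁅y, g ^ e⁆ = ⁅y, g⁆ ^ e := by
  induction e with
  | zero => simp
  | succ e ih =>
    rw [pow_succ, commutatorElement_mul_right_eq_mul_conj, ih, mul_assoc (⁅y, g⁆ ^ e),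
      ← (h _).eq, ← mul_assoc, mul_inv_cancel_right, pow_succ]

lemma commutatorElement_pow_pow_of_commute {y : G} (h : ∀ b z : G, Commute ⁅y, b⁆ z) (g : G)
    (a e : ℕ) : ⁅y ^ a, g ^ e⁆ = ⁅y, g⁆ ^ (a * e) := by
  rw [commutatorElement_pow_left_of_commute (h _), commutatorElement_pow_right_of_commute (h g),
    ← pow_mul, mul_comm]

lemma inv_commutatorElement_pow_pow_mul_mem {M : Subgroup G} [M.Normal] {y : G}
    (h : ∀ b z : G, ⁅⁅y, b⁆, z⁆ ∈ M) (g : G) (a e : ℕ) :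
    ⁅y ^ a, g ^ e⁆⁻¹ * ⁅y, g⁆ ^ (a * e) ∈ M := by
  let π := QuotientGroup.mk' M
  have hπ : ∀ b z : G ⧸ M, Commute ⁅π y, b⁆ z := by
    intro b z
    obtain ⟨b, rfl⟩ := QuotientGroup.mk'_surjective M b
    obtain ⟨z, rfl⟩ := QuotientGroup.mk'_surjective M z
    rw [← commutatorElement_eq_one_iff_commute, ← map_commutatorElement, ← map_commutatorElement]
    exact (QuotientGroup.eq_one_iff _).mpr (h b z)
  rw [← QuotientGroup.eq]
  change π _ = π _
  simpa only [map_pow, map_commutatorElement] using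
    commutatorElement_pow_pow_of_commute hπ (π g) a e

end Commutator

section LowerCentralSeries

variable {N : Type*} [Group N] [Group.IsNilpotent N] (H : Subgroup N) [H.Normal] [H.FiniteIndex]

theorem lowerCentralSeries_succ_le_isolator_of_le {n j : ℕ} (hnj : n ≤ j)
    (ih : (⊤ : Subgroup N).lowerCentralSeries n ≤ (H.lowerCentralSeries n).isolator)
    (hnext : (⊤ : Subgroup N).lowerCentralSeries (j + 2) ≤
      (H.lowerCentralSeries (n + 1)).isolator) :
    (⊤ : Subgroup N).lowerCentralSeries (j + 1) ≤ (H.lowerCentralSeries (n + 1)).isolator := by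
  rw [Subgroup.lowerCentralSeries_succ, commutator_le]
  intro y hy g _
  obtain ⟨a, ha, hya⟩ :=
    mem_isolator_iff.mp (ih (Subgroup.lowerCentralSeries_antitone _ hnj hy))
  have hcomm : ⁅y ^ a, g ^ H.index⁆ ∈ H.lowerCentralSeries (n + 1) :=
    commutator_mem_commutator hya (H.pow_index_mem g)
  have hmod : ⁅y ^ a, g ^ H.index⁆⁻¹ * ⁅y, g⁆ ^ (a * H.index) ∈
      (⊤ : Subgroup N).lowerCentralSeries (j + 2) :=
    inv_commutatorElement_pow_pow_mul_mem (fun b z => commutator_mem_commutator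
      (commutator_mem_commutator hy (mem_top b)) (mem_top z)) g a H.index
  refine mem_isolator_of_pow_mem (Nat.mul_ne_zero ha.ne' (FiniteIndex.index_ne_zero (H := H))) ?_
  rw [← mul_inv_cancel_left ⁅y ^ a, g ^ H.index⁆ (⁅y, g⁆ ^ (a * H.index))]
  exact mul_mem (le_isolator hcomm) (hnext hmod)

theorem lowerCentralSeries_le_isolator (n : ℕ) :
    (⊤ : Subgroup N).lowerCentralSeries n ≤ (H.lowerCentralSeries n).isolator := by
  induction n with
  | zero =>
    exact fun x _ => mem_isolator_iff.mpr
      ⟨H.index, Nat.pos_of_ne_zero FiniteIndex.index_ne_zero, H.pow_index_mem x⟩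
  | succ n ih =>
    obtain ⟨B, hB⟩ := Subgroup.nilpotent_iff_lowerCentralSeries.mp ‹Group.IsNilpotent N›
    refine Nat.decreasingInduction'
      (P := fun j => (⊤ : Subgroup N).lowerCentralSeries (j + 1) ≤ _)
      (fun j _ hnj => lowerCentralSeries_succ_le_isolator_of_le H hnj ih)
      (Nat.le_add_right n B) ?_
    calc (⊤ : Subgroup N).lowerCentralSeries (n + B + 1)
        ≤ (⊤ : Subgroup N).lowerCentralSeries B :=
          Subgroup.lowerCentralSeries_antitone _ (by omega)
      _ = ⊥ := hB
      _ ≤ _ := bot_le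

end LowerCentralSeries

section Isolators

variable {N : Type*} [Group N]

theorem mem_top_lowerCentralSeries_iff (H : Subgroup N) (n : ℕ) {y : H} :
    y ∈ (⊤ : Subgroup H).lowerCentralSeries n ↔ (y : N) ∈ H.lowerCentralSeries n := by
  rw [← top_subtype_lowerCentralSeries H n]
  exact (mem_map_iff_mem H.subtype_injective).symm

theorem isolatorLCSSubgroup_eq_inter [Group.IsNilpotent N] (H : Subgroup N) [H.FiniteIndex]
    (j : ℕ) : isolatorLCSSubgroup H j = (H : Set N) ∩ isolatorLCS N j := by
  ext x
  simp only [isolatorLCSSubgroup, mem_top_lowerCentralSeries_iff, SubgroupClass.coe_pow]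
  constructor
  · rintro ⟨hxH, m, hm, hpow⟩
    exact ⟨hxH, m, hm, lowerCentralSeries_mono _ le_top hpow⟩
  · rintro ⟨hxH, m, hm, hpow⟩
    obtain ⟨t, ht, hxt⟩ :=
      mem_isolator_iff.mp (lowerCentralSeries_le_isolator H.normalCore _ hpow)
    refine ⟨hxH, m * t, Nat.mul_pos hm ht, ?_⟩
    rw [pow_mul]
    exact lowerCentralSeries_mono _ H.normalCore_le hxt

end Isolators

/-- The second isomorphism theorem `A ⧸ (A ∩ M) ≃* AM ⧸ M`, with `AM ⧸ M` realised as the image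
of `A` in `G ⧸ M`. -/
noncomputable def quotientSubgroupOfEquivMap {G : Type*} [Group G] (A M : Subgroup G)
    [M.Normal] : A ⧸ M.subgroupOf A ≃* A.map (QuotientGroup.mk' M) :=
  (QuotientGroup.quotientMulEquivOfEq (by
      rw [← MonoidHom.comap_ker, QuotientGroup.ker_mk']; rfl)).trans <|
    (QuotientGroup.quotientKerEquivRange ((QuotientGroup.mk' M).comp A.subtype)).trans <|
      MulEquiv.subgroupCongr (by rw [MonoidHom.range_comp, range_subtype])

theorem isolator_intersection_finiteIndex_iso_general
    {N : Type*} [Group N] [Group.IsNilpotent N]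
    (H : Subgroup N) [H.FiniteIndex]
    (Ni Hi : ℕ → Subgroup N)
    (hNi : ∀ j, (Ni j : Set N) = isolatorLCS N j)
    (hHi : ∀ j, (Hi j : Set N) = isolatorLCSSubgroup H j)
    [∀ j, (Ni j).Normal] [∀ j, ((Hi (j + 1)).subgroupOf (Hi j)).Normal]
    (i : ℕ) :
    (Hi i : Set N) = (H : Set N) ∩ (Ni i : Set N) ∧
    (Hi i ≤ Ni i ∧ ((Hi i).subgroupOf (Ni i)).FiniteIndex) ∧
    ∃ e : (↥(Hi i) ⧸ (Hi (i + 1)).subgroupOf (Hi i)) ≃*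
        ↥((Hi i).map (QuotientGroup.mk' (Ni (i + 1)))),
      ∀ x : ↥(Hi i),
        ((e (QuotientGroup.mk x) : ↥((Hi i).map (QuotientGroup.mk' (Ni (i + 1))))) : N ⧸ Ni (i + 1))
          = QuotientGroup.mk (x : N) := by
  have hHi_eq (j : ℕ) : (Hi j : Set N) = (H : Set N) ∩ Ni j := by
    rw [hHi, hNi, isolatorLCSSubgroup_eq_inter]
  have mem_Hi (j : ℕ) (x : N) : x ∈ Hi j ↔ x ∈ H ∧ x ∈ Ni j := Set.ext_iff.mp (hHi_eq j) x
  have hfin : (Hi i).subgroupOf (Ni i) = H.subgroupOf (Ni i) := by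
    ext x
    simp only [mem_subgroupOf, mem_Hi, x.2, and_true]
  have hker : (Hi (i + 1)).subgroupOf (Hi i) = (Ni (i + 1)).subgroupOf (Hi i) := by
    ext x
    simp only [mem_subgroupOf, mem_Hi, ((mem_Hi i x).mp x.2).1, true_and]
  refine ⟨hHi_eq i, ⟨fun x hx => ((mem_Hi i x).mp hx).2, hfin ▸ inferInstance⟩,
    (QuotientGroup.quotientMulEquivOfEq hker).trans (quotientSubgroupOfEquivMap _ _),
    fun _ => rfl⟩

/-- Lemma 4.2 of the paper.
Let `N` be a finitely generated torsion-free nilpotent group of nilpotency class `c` and `H`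
a finite-index subgroup.  With `N_i = √[N]{γ_i(N)}` and `H_i = √[H]{γ_i(H)}` (for
`1 ≤ i ≤ c+1`): (1) `H_i = H ∩ N_i`; (2) `H_i ≤_f N_i`; (3) there is a group isomorphism
`H_i/H_{i+1} ≅ H_i N_{i+1}/N_{i+1}` induced by `h·H_{i+1} ↦ h·N_{i+1}`. -/
theorem isolator_intersection_finiteIndex_iso
    {N : Type*} [Group N] [Group.IsNilpotent N]
    (hfg : Group.FG N) (htf : Monoid.IsTorsionFree N)
    (c : ℕ) (hc : Group.nilpotencyClass N = c)
    (H : Subgroup N) [H.FiniteIndex]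
    (Ni Hi : ℕ → Subgroup N)
    (hNi : ∀ j, (Ni j : Set N) = isolatorLCS N j)
    (hHi : ∀ j, (Hi j : Set N) = isolatorLCSSubgroup H j)
    [∀ j, (Ni j).Normal] [∀ j, ((Hi (j + 1)).subgroupOf (Hi j)).Normal]
    (i : ℕ) (h1 : 1 ≤ i) (h2 : i ≤ c + 1) :
    (Hi i : Set N) = (H : Set N) ∩ (Ni i : Set N) ∧
    (Hi i ≤ Ni i ∧ ((Hi i).subgroupOf (Ni i)).FiniteIndex) ∧
    ∃ e : (↥(Hi i) ⧸ (Hi (i + 1)).subgroupOf (Hi i)) ≃*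
        ↥((Hi i).map (QuotientGroup.mk' (Ni (i + 1)))),
      ∀ x : ↥(Hi i),
        ((e (QuotientGroup.mk x) : ↥((Hi i).map (QuotientGroup.mk' (Ni (i + 1))))) : N ⧸ Ni (i + 1))
          = QuotientGroup.mk (x : N) :=
  isolator_intersection_finiteIndex_iso_general H Ni Hi hNi hHi i
end

section
/- Let k be a positive integer, B ∈ ℤ^{k×k} a matrix with det(B) ≠ 0, and M ∈ ℚ^{k×k} a matrix such that M·B has integer entries, so that ψ : Bℤ^k → ℤ^k, z ↦ Mz, is a well-defined group homomorphism from the finite-index subgroup Bℤ^k of ℤ^k to ℤ^k. Suppose det(I_k − M) ≠ 0. Then the equivalence relation on ℤ^k defined by z₁ ∼_ψ z₂ iff there exists w ∈ Bℤ^k with z₁ = w + z₂ − ψ(w) has exactly [ℤ^k : Bℤ^k]·|det(I_k − M)| = |det(B)|·|det(I_k − M)| equivalence classes. -/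
/-!
Since `ψ(Bv) = Cv`, two vectors are related exactly when they differ by an element of the image
of `B - C`, so the classes are the cosets of `(B - C)ℤᵏ`, of which there are `|det (B - C)|`
(Smith normal form). Over `ℚ`, `B - C = (1 - M) B`.
-/

namespace Matrix

theorem natCard_quotient_range_mulVecLin {n : Type*} [Fintype n] [DecidableEq n]
    {A : Matrix n n ℤ} (hA : A.det ≠ 0) :
    Nat.card ((n → ℤ) ⧸ LinearMap.range A.mulVecLin) = A.det.natAbs := by
  let e := LinearEquiv.ofInjective A.mulVecLin (mulVec_injective_of_det_ne_zero hA)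
  rw [← Submodule.natAbs_det_equiv _ e.toAddEquiv, ← LinearMap.det_toLin', toLin'_apply']
  rfl

def quotEquivQuotientRangeSub {m n R : Type*} [Fintype n] [CommRing R]
    (B C : Matrix m n R) :
    Quot (fun z₁ z₂ : m → R => ∃ v : n → R, z₁ = B *ᵥ v + z₂ - C *ᵥ v) ≃
      (m → R) ⧸ LinearMap.range (B - C).mulVecLin :=
  Quot.congrRight fun z₁ z₂ => by
    rw [Submodule.quotientRel_def, LinearMap.mem_range]
    simp only [mulVecLin_apply, sub_mulVec]
    constructor
    · rintro ⟨v, rfl⟩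
      exact ⟨v, by abel⟩
    · rintro ⟨v, hv⟩
      exact ⟨v, by rw [add_sub_right_comm, hv, sub_add_cancel]⟩

theorem map_det_sub_of_mul_map_eq {n R S : Type*} [Fintype n] [DecidableEq n]
    [CommRing R] [CommRing S] (f : R →+* S) {B C : Matrix n n R} {M : Matrix n n S}
    (h : M * B.map f = C.map f) :
    f (B - C).det = (1 - M).det * f B.det := by
  rw [RingHom.map_det, RingHom.map_det, RingHom.mapMatrix_apply, RingHom.mapMatrix_apply,
    Matrix.map_sub _ (map_sub f), ← h, ← det_mul, sub_mul, one_mul]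

end Matrix

theorem reidemeister_abelian_finite_general
    (k : ℕ)
    (B : Matrix (Fin k) (Fin k) ℤ) (hB : B.det ≠ 0)
    (M : Matrix (Fin k) (Fin k) ℚ)
    (C : Matrix (Fin k) (Fin k) ℤ)
    (hC : M * B.map (Int.cast : ℤ → ℚ) = C.map (Int.cast : ℤ → ℚ))
    (hM : (1 - M).det ≠ 0) :
    Finite (Quot (fun z₁ z₂ : Fin k → ℤ =>
        ∃ v : Fin k → ℤ, z₁ = B.mulVec v + z₂ - C.mulVec v)) ∧
    (Nat.card (Quot (fun z₁ z₂ : Fin k → ℤ =>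
        ∃ v : Fin k → ℤ, z₁ = B.mulVec v + z₂ - C.mulVec v)) : ℚ)
      = |(B.det : ℚ)| * |(1 - M).det| := by
  have hdet : ((B - C).det : ℚ) = (1 - M).det * B.det :=
    Matrix.map_det_sub_of_mul_map_eq (Int.castRingHom ℚ) hC
  have hdet_ne : (B - C).det ≠ 0 := by
    have : ((B - C).det : ℚ) ≠ 0 := hdet ▸ mul_ne_zero hM (Int.cast_ne_zero.mpr hB)
    exact_mod_cast this
  have hcard : Nat.card (Quot (fun z₁ z₂ : Fin k → ℤ =>
      ∃ v : Fin k → ℤ, z₁ = B.mulVec v + z₂ - C.mulVec v)) = (B - C).det.natAbs :=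
    (Nat.card_congr (Matrix.quotEquivQuotientRangeSub B C)).trans
    (Matrix.natCard_quotient_range_mulVecLin hdet_ne)
  refine ⟨Nat.finite_of_card_ne_zero (by simpa [hcard]), ?_⟩
  rw [hcard, Nat.cast_natAbs, Int.cast_abs, hdet, abs_mul, mul_comm]

/-- Proposition 4.4 of the paper, the case `det(I − M) ≠ 0`.
Let `k` be a positive integer, `B ∈ ℤ^{k×k}` with `det B ≠ 0`, and `M ∈ ℚ^{k×k}` such that
`M·B` has integer entries (witnessed by the integral matrix `C`), so that
`ψ : Bℤᵏ → ℤᵏ, z ↦ Mz` is a well-defined homomorphism; on `Bℤᵏ` it is given by `Bv ↦ Cv`.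
Suppose `det(Iₖ − M) ≠ 0`.  Then the equivalence relation on `ℤᵏ` defined by
`z₁ ∼ z₂ ↔ ∃ w ∈ Bℤᵏ, z₁ = w + z₂ − ψ(w)` has exactly `|det B|·|det(Iₖ − M)|`
equivalence classes. -/
theorem reidemeister_abelian_finite
    (k : ℕ) (hk : 0 < k)
    (B : Matrix (Fin k) (Fin k) ℤ) (hB : B.det ≠ 0)
    (M : Matrix (Fin k) (Fin k) ℚ)
    (C : Matrix (Fin k) (Fin k) ℤ)
    (hC : M * B.map (Int.cast : ℤ → ℚ) = C.map (Int.cast : ℤ → ℚ))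
    (hM : (1 - M).det ≠ 0) :
    Finite (Quot (fun z₁ z₂ : Fin k → ℤ =>
        ∃ v : Fin k → ℤ, z₁ = B.mulVec v + z₂ - C.mulVec v)) ∧
    (Nat.card (Quot (fun z₁ z₂ : Fin k → ℤ =>
        ∃ v : Fin k → ℤ, z₁ = B.mulVec v + z₂ - C.mulVec v)) : ℚ)
      = |(B.det : ℚ)| * |(1 - M).det| :=
  reidemeister_abelian_finite_general k B hB M C hC hM
end

section
/- Let B₂ be a group, A₂ a normal subgroup of B₂, B₁ a finite-index subgroup of B₂, and A₁ := B₁ ∩ A₂; assume A₁ has finite index in A₂ and A₁ is normal in B₁. Let φ : B₁ → B₂ be a homomorphism with φ(A₁) ⊆ A₂; let φ' : A₁ → A₂ be its restriction and φ̄ : B₁A₂/A₂ → B₂/A₂ the induced homomorphism (b·A₂ ↦ φ(b)·A₂). If the generalized twisted conjugacy relation of φ̄ on B₂/A₂ has infinitely many equivalence classes, then the generalized twisted conjugacy relation of φ on B₂ has infinitely many equivalence classes, i.e. R(φ̄) = ∞ implies R(φ) = ∞. -/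
/-- The Reidemeister number (in `ℕ∞`) of the generalized twisted conjugacy relation on `G`
determined by a "subgroup inclusion" `ι : H →* G` and a homomorphism `φ : H →* G`:
`a ∼ b ↔ ∃ γ ∈ H, a = ι(γ)·b·φ(γ)⁻¹`. -/
noncomputable def reidemeisterNumber {H G : Type*} [Group H] [Group G]
    (ι : H →* G) (φ : H →* G) : ℕ∞ :=
  ENat.card (Quot (fun a b : G => ∃ γ : H, a = ι γ * b * (φ γ)⁻¹))

lemma enat_card_eq_top_iff (α : Type*) : ENat.card α = ⊤ ↔ Infinite α := by
  rw [ENat.card, Cardinal.toENat_eq_top, Cardinal.infinite_iff]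

/-- part (1) of Lemma 4.6 of the paper.
`A₂ ⊴ B₂`, `B₁ ≤_f B₂`, `A₁ = B₁ ∩ A₂ ≤_f A₂` with `A₁ ⊴ B₁`; `φ : B₁ → B₂` satisfies
`φ(A₁) ⊆ A₂`, and `φ̄ : B₁A₂/A₂ → B₂/A₂` is the induced homomorphism.  If `R(φ̄) = ∞`
then `R(φ) = ∞`. -/
theorem reidemeister_infinite_of_quotient_infinite
    {B₂ : Type*} [Group B₂] (A₂ : Subgroup B₂) [A₂.Normal]
    (B₁ : Subgroup B₂) [B₁.FiniteIndex]
    (hA₁fi : ((B₁ ⊓ A₂).subgroupOf A₂).FiniteIndex)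
    (hA₁norm : ((B₁ ⊓ A₂).subgroupOf B₁).Normal)
    (φ : B₁ →* B₂)
    (hφA : ∀ b : B₁, (b : B₂) ∈ A₂ → φ b ∈ A₂)
    (φbar : ↥(B₁.map (QuotientGroup.mk' A₂)) →* B₂ ⧸ A₂)
    (hφbar : ∀ b : B₁,
      φbar ⟨QuotientGroup.mk' A₂ (b : B₂), Subgroup.mem_map.mpr ⟨(b : B₂), b.2, rfl⟩⟩
        = QuotientGroup.mk' A₂ (φ b))
    (hinf : reidemeisterNumber (B₁.map (QuotientGroup.mk' A₂)).subtype φbar = ⊤) :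
    reidemeisterNumber B₁.subtype φ = ⊤ := by
  rw [reidemeisterNumber, enat_card_eq_top_iff] at hinf ⊢
  set r₁ := fun a b : B₂ => ∃ γ : B₁, a = B₁.subtype γ * b * (φ γ)⁻¹ with hr₁
  set r₂ := fun a b : B₂ ⧸ A₂ =>
    ∃ γ : ↥(B₁.map (QuotientGroup.mk' A₂)),
      a = (B₁.map (QuotientGroup.mk' A₂)).subtype γ * b * (φbar γ)⁻¹ with hr₂
  have hcompat : ∀ a b : B₂, r₁ a b →
      Quot.mk r₂ (QuotientGroup.mk' A₂ a) = Quot.mk r₂ (QuotientGroup.mk' A₂ b) := by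
    intro a b ⟨γ, hγ⟩
    apply Quot.sound
    refine ⟨⟨QuotientGroup.mk' A₂ (γ : B₂), Subgroup.mem_map.mpr ⟨(γ : B₂), γ.2, rfl⟩⟩, ?_⟩
    rw [hγ]
    simp only [Subgroup.coe_subtype, map_mul, map_inv, hφbar γ]
  let f : Quot r₁ → Quot r₂ :=
    Quot.lift (fun a => Quot.mk r₂ (QuotientGroup.mk' A₂ a)) hcompat
  have hsurj : Function.Surjective f := by
    intro q
    induction q using Quot.ind with
    | _ x =>
      obtain ⟨a, rfl⟩ := QuotientGroup.mk'_surjective A₂ x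
      exact ⟨Quot.mk r₁ a, rfl⟩
  exact Infinite.of_surjective f hsurj
end

section
/- Let B₂ be a group, A₂ a normal subgroup of B₂, B₁ a finite-index subgroup of B₂, and A₁ := B₁ ∩ A₂; assume A₁ has finite index in A₂ and A₁ is normal in B₁. Let φ : B₁ → B₂ be a homomorphism with φ(A₁) ⊆ A₂; let φ' : A₁ → A₂ be its restriction and φ̄ : B₁A₂/A₂ → B₂/A₂ the induced homomorphism (b·A₂ ↦ φ(b)·A₂). If R(φ̄) < ∞, the fixed point set Fix(φ̄) = {x ∈ B₁A₂/A₂ : φ̄(x) = x} is finite, and R(φ') = ∞, then R(φ) = ∞. -/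
def twistedConj {H G : Type*} [Group H] [Group G] (ι φ : H →* G) (a b : G) : Prop :=
  ∃ γ : H, a = ι γ * b * (φ γ)⁻¹

section TwistedConj

variable {H G : Type*} [Group H] [Group G] (ι φ : H →* G)

theorem twistedConj_equivalence : Equivalence (twistedConj ι φ) where
  refl _ := ⟨1, by simp⟩
  symm := by
    rintro _ _ ⟨γ, rfl⟩
    exact ⟨γ⁻¹, by simp [mul_assoc]⟩
  trans := by
    rintro _ _ _ ⟨γ, rfl⟩ ⟨δ, rfl⟩
    exact ⟨γ * δ, by simp [mul_assoc]⟩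

theorem reidemeisterNumber_eq_top_iff :
    reidemeisterNumber ι φ = ⊤ ↔ Infinite (Quot (twistedConj ι φ)) :=
  ENat.card_eq_top

end TwistedConj

theorem Quot.finite_of_finite_range {X Z : Type*} {r : X → X → Prop} (f : X → Z)
    (hf : (Set.range f).Finite) (h : ∀ x y, f x = f y → r x y) : Finite (Quot r) := by
  have := hf.to_subtype
  refine Finite.of_surjective (fun z : Set.range f => Quot.mk r z.2.choose) ?_
  refine Quot.ind fun x => ⟨⟨f x, x, rfl⟩, Quot.sound (h _ _ ?_)⟩
  exact Exists.choose_spec (p := fun y => f y = f x) ⟨x, rfl⟩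

theorem QuotientGroup.mk_eq_mk_of_eq_mul_mul_inv {G : Type*} [Group G] {N : Subgroup G}
    [N.Normal] {α β g k : G} (hα : α ∈ N) (hβ : β ∈ N) (h : α = g * β * k⁻¹) :
    (g : G ⧸ N) = k := by
  have hmk := congrArg ((↑) : G → G ⧸ N) h
  rw [(QuotientGroup.eq_one_iff α).mpr hα, QuotientGroup.mk_mul, QuotientGroup.mk_mul,
    (QuotientGroup.eq_one_iff β).mpr hβ, mul_one, QuotientGroup.mk_inv] at hmk
  exact mul_inv_eq_one.mp hmk.symm

section Restriction

variable {G : Type*} [Group G] {N : Subgroup G} {H : Subgroup G} {φ : H →* G}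
  {φ' : ↥((H ⊓ N).subgroupOf N) →* N}

theorem twistedConj_restriction_of_mem
    (hφ' : ∀ (a : N) (h : (a : G) ∈ H),
      ((φ' ⟨a, Subgroup.mem_subgroupOf.mpr (Subgroup.mem_inf.mpr ⟨h, a.2⟩)⟩ : N) : G)
        = φ ⟨(a : G), h⟩)
    {α β : N} (δ : H) (hδ : (δ : G) ∈ N) (h : (α : G) = δ * β * (φ δ)⁻¹) :
    twistedConj ((H ⊓ N).subgroupOf N).subtype φ' α β := by
  refine ⟨⟨⟨δ, hδ⟩, Subgroup.mem_subgroupOf.mpr (Subgroup.mem_inf.mpr ⟨δ.2, hδ⟩)⟩, ?_⟩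
  ext
  simp only [Subgroup.coe_mul, Subgroup.coe_inv, Subgroup.coe_subtype, hφ' ⟨δ, hδ⟩ δ.2]
  exact h

theorem finite_quot_twistedConj_restriction [N.Normal]
    (hφ' : ∀ (a : N) (h : (a : G) ∈ H),
      ((φ' ⟨a, Subgroup.mem_subgroupOf.mpr (Subgroup.mem_inf.mpr ⟨h, a.2⟩)⟩ : N) : G)
        = φ ⟨(a : G), h⟩)
    (φbar : ↥(H.map (QuotientGroup.mk' N)) →* G ⧸ N)
    (hφbar : ∀ b : H,
      φbar ⟨QuotientGroup.mk' N (b : G), Subgroup.mem_map.mpr ⟨(b : G), b.2, rfl⟩⟩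
        = QuotientGroup.mk' N (φ b))
    (hFix : {x : ↥(H.map (QuotientGroup.mk' N)) | φbar x = (x : G ⧸ N)}.Finite)
    (hR : Finite (Quot (twistedConj H.subtype φ))) :
    Finite (Quot (twistedConj ((H ⊓ N).subgroupOf N).subtype φ')) := by
  let classOf (α : N) : Quot (twistedConj H.subtype φ) := Quot.mk _ (α : G)
  let base (α : N) : N := Function.invFun classOf (classOf α)
  have hbase (α : N) : ∃ γ : H, (α : G) = γ * (base α : G) * (φ γ)⁻¹ :=
    ((twistedConj_equivalence _ _).quot_mk_eq_iff _ _).mp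
      (Function.invFun_eq (f := classOf) ⟨α, rfl⟩).symm
  choose γ hγ using hbase
  let coset (α : N) : ↥(H.map (QuotientGroup.mk' N)) :=
    ⟨QuotientGroup.mk' N (γ α : G), Subgroup.mem_map.mpr ⟨_, (γ α).2, rfl⟩⟩
  have hcoset_fix (α : N) : coset α ∈ {x | φbar x = (x : G ⧸ N)} := by
    show φbar _ = _
    rw [hφbar]
    exact (QuotientGroup.mk_eq_mk_of_eq_mul_mul_inv α.2 (base α).2 (hγ α)).symm
  refine Quot.finite_of_finite_range (fun α => (classOf α, coset α))
    ((Set.finite_univ.prod hFix).subset (Set.range_subset_iff.mpr fun α =>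
      ⟨Set.mem_univ _, hcoset_fix α⟩)) fun α₁ α₂ heq => ?_
  obtain ⟨hclass, hcoset⟩ := Prod.mk_inj.mp heq
  have h₁ := hγ α₁
  have h₂ := hγ α₂
  rw [← show base α₁ = base α₂ from congrArg (Function.invFun classOf) hclass] at h₂
  have hδ : ((γ α₁ * (γ α₂)⁻¹ : H) : G) ∈ N := by
    simpa [div_eq_mul_inv] using QuotientGroup.eq_iff_div_mem.mp (congrArg Subtype.val hcoset)
  refine twistedConj_restriction_of_mem hφ' _ hδ ?_
  rw [h₁, h₂, map_mul, map_inv]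
  simp only [Subgroup.coe_mul, Subgroup.coe_inv]
  group

end Restriction

theorem reidemeister_infinite_of_restriction_infinite_general
    {B₂ : Type*} [Group B₂] (A₂ : Subgroup B₂) [A₂.Normal]
    (B₁ : Subgroup B₂)
    (φ : B₁ →* B₂)
    (φ' : ↥((B₁ ⊓ A₂).subgroupOf A₂) →* A₂)
    (hφ' : ∀ (a : A₂) (h : (a : B₂) ∈ B₁),
      ((φ' ⟨a, Subgroup.mem_subgroupOf.mpr (Subgroup.mem_inf.mpr ⟨h, a.2⟩)⟩ : A₂) : B₂)
        = φ ⟨(a : B₂), h⟩)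
    (φbar : ↥(B₁.map (QuotientGroup.mk' A₂)) →* B₂ ⧸ A₂)
    (hφbar : ∀ b : B₁,
      φbar ⟨QuotientGroup.mk' A₂ (b : B₂), Subgroup.mem_map.mpr ⟨(b : B₂), b.2, rfl⟩⟩
        = QuotientGroup.mk' A₂ (φ b))
    (hFix : {x : ↥(B₁.map (QuotientGroup.mk' A₂)) | φbar x = (x : B₂ ⧸ A₂)}.Finite)
    (hinf : reidemeisterNumber ((B₁ ⊓ A₂).subgroupOf A₂).subtype φ' = ⊤) :
    reidemeisterNumber B₁.subtype φ = ⊤ := by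
  rw [reidemeisterNumber_eq_top_iff, ← not_finite_iff_infinite] at hinf ⊢
  exact fun hR => hinf (finite_quot_twistedConj_restriction hφ' φbar hφbar hFix hR)

/-- part (2) of Lemma 4.6 of the paper.
`A₂ ⊴ B₂`, `B₁ ≤_f B₂`, `A₁ = B₁ ∩ A₂ ≤_f A₂` with `A₁ ⊴ B₁`; `φ : B₁ → B₂` satisfies
`φ(A₁) ⊆ A₂`, with restriction `φ' : A₁ → A₂` and induced homomorphism
`φ̄ : B₁A₂/A₂ → B₂/A₂`.  If `R(φ̄) < ∞`, `Fix(φ̄)` is finite and `R(φ') = ∞`,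
then `R(φ) = ∞`. -/
theorem reidemeister_infinite_of_restriction_infinite
    {B₂ : Type*} [Group B₂] (A₂ : Subgroup B₂) [A₂.Normal]
    (B₁ : Subgroup B₂) [B₁.FiniteIndex]
    (hA₁fi : ((B₁ ⊓ A₂).subgroupOf A₂).FiniteIndex)
    (hA₁norm : ((B₁ ⊓ A₂).subgroupOf B₁).Normal)
    (φ : B₁ →* B₂)
    (hφA : ∀ b : B₁, (b : B₂) ∈ A₂ → φ b ∈ A₂)
    (φ' : ↥((B₁ ⊓ A₂).subgroupOf A₂) →* A₂)
    (hφ' : ∀ (a : A₂) (h : (a : B₂) ∈ B₁),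
      ((φ' ⟨a, Subgroup.mem_subgroupOf.mpr (Subgroup.mem_inf.mpr ⟨h, a.2⟩)⟩ : A₂) : B₂)
        = φ ⟨(a : B₂), h⟩)
    (φbar : ↥(B₁.map (QuotientGroup.mk' A₂)) →* B₂ ⧸ A₂)
    (hφbar : ∀ b : B₁,
      φbar ⟨QuotientGroup.mk' A₂ (b : B₂), Subgroup.mem_map.mpr ⟨(b : B₂), b.2, rfl⟩⟩
        = QuotientGroup.mk' A₂ (φ b))
    (hfin : reidemeisterNumber (B₁.map (QuotientGroup.mk' A₂)).subtype φbar ≠ ⊤)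
    (hFix : {x : ↥(B₁.map (QuotientGroup.mk' A₂)) | φbar x = (x : B₂ ⧸ A₂)}.Finite)
    (hinf : reidemeisterNumber ((B₁ ⊓ A₂).subgroupOf A₂).subtype φ' = ⊤) :
    reidemeisterNumber B₁.subtype φ = ⊤ :=
  reidemeister_infinite_of_restriction_infinite_general A₂ B₁ φ φ' hφ' φbar hφbar hFix hinf
end

section
/- Let B₂ be a group, A₂ a normal subgroup of B₂ contained in the center Z(B₂), B₁ a finite-index subgroup of B₂, and A₁ := B₁ ∩ A₂; assume A₁ has finite index in A₂. Let φ : B₁ → B₂ be a homomorphism with φ(A₁) ⊆ A₂; let φ' : A₁ → A₂ be its restriction and φ̄ : B₁A₂/A₂ → B₂/A₂ the induced homomorphism (b·A₂ ↦ φ(b)·A₂). Then R(φ) ≤ R(φ̄)·R(φ'), where the product is ∞ if either factor is ∞. -/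
/-!
Write `π : B₂ → B₂/A₂`. If `π a` and `π b` are `φ̄`-conjugate, then `a` is `φ`-conjugate
to `b·c` for some `c ∈ A₂`; and since `A₂` is central, replacing `c` by a `φ'`-conjugate
does not change the `φ`-class of `b·c`. Hence `(x, y) ↦ [s(x)·y]`, for any choice of
representatives `s(x) ∈ B₂` of the `φ̄`-classes `x`, maps the `φ̄`-classes times the
`φ'`-classes onto the `φ`-classes.
-/

theorem ENat.card_le_mul_of_surjective {α β γ : Type*} {f : α × β → γ}
    (hf : Function.Surjective f) : ENat.card γ ≤ ENat.card α * ENat.card β :=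
  ENat.card_prod α β ▸ ENat.card_le_card_of_injective (Function.injective_surjInv hf)

namespace Reidemeister

section TwistedConj

variable {H G : Type*} [Group H] [Group G]

def twistedConj (ι φ : H →* G) : Setoid G where
  r a b := ∃ γ : H, a = ι γ * b * (φ γ)⁻¹
  iseqv := by
    refine ⟨fun a => ⟨1, by simp⟩, ?_, ?_⟩
    · rintro a b ⟨γ, rfl⟩
      exact ⟨γ⁻¹, by simp [mul_assoc]⟩
    · rintro a b c ⟨γ, rfl⟩ ⟨δ, rfl⟩
      exact ⟨γ * δ, by simp [mul_assoc]⟩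

theorem reidemeisterNumber_eq_card (ι φ : H →* G) :
    reidemeisterNumber ι φ = ENat.card (Quotient (twistedConj ι φ)) :=
  rfl

end TwistedConj

section Central

variable {B₂ : Type*} [Group B₂] {A₂ B₁ : Subgroup B₂} {φ : B₁ →* B₂}

theorem exists_twistedConj_mul_of_twistedConj_mk [A₂.Normal]
    (hA₂central : A₂ ≤ Subgroup.center B₂)
    {φbar : ↥(B₁.map (QuotientGroup.mk' A₂)) →* B₂ ⧸ A₂}
    (hφbar : ∀ b : B₁,
      φbar ⟨QuotientGroup.mk' A₂ (b : B₂), Subgroup.mem_map.mpr ⟨(b : B₂), b.2, rfl⟩⟩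
        = QuotientGroup.mk' A₂ (φ b))
    {a b : B₂} (h : twistedConj (B₁.map (QuotientGroup.mk' A₂)).subtype φbar a b) :
    ∃ c ∈ A₂, twistedConj B₁.subtype φ a (b * c) := by
  obtain ⟨⟨_, γ, hγ, rfl⟩, hab⟩ := h
  rw [hφbar ⟨γ, hγ⟩] at hab
  set d := γ * b * (φ ⟨γ, hγ⟩)⁻¹
  have hc : d⁻¹ * a ∈ A₂ := QuotientGroup.eq.mp (by simpa [d] using hab.symm)
  refine ⟨d⁻¹ * a, hc, ⟨γ, hγ⟩, ?_⟩
  calc a = d * (d⁻¹ * a) := (mul_inv_cancel_left d a).symm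
    _ = γ * (b * (d⁻¹ * a)) * (φ ⟨γ, hγ⟩)⁻¹ := by
      rw [mul_assoc (γ * b), Subgroup.mem_center_iff.mp (hA₂central hc), ← mul_assoc,
        mul_assoc γ]

theorem twistedConj_mul_left_of_twistedConj (hA₂central : A₂ ≤ Subgroup.center B₂)
    {φ' : ↥((B₁ ⊓ A₂).subgroupOf A₂) →* A₂}
    (hφ' : ∀ (a : A₂) (h : (a : B₂) ∈ B₁),
      ((φ' ⟨a, Subgroup.mem_subgroupOf.mpr (Subgroup.mem_inf.mpr ⟨h, a.2⟩)⟩ : A₂) : B₂)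
        = φ ⟨(a : B₂), h⟩)
    (b : B₂) {c c' : A₂} (h : twistedConj ((B₁ ⊓ A₂).subgroupOf A₂).subtype φ' c c') :
    twistedConj B₁.subtype φ (b * c) (b * c') := by
  obtain ⟨⟨η, hη⟩, rfl⟩ := h
  have hηB₁ : (η : B₂) ∈ B₁ := (Subgroup.mem_inf.mp (Subgroup.mem_subgroupOf.mp hη)).1
  refine ⟨⟨η, hηB₁⟩, ?_⟩
  rw [← hφ' η hηB₁]
  simp only [Subgroup.coe_subtype, Subgroup.coe_mul, Subgroup.coe_inv, ← mul_assoc,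
    Subgroup.mem_center_iff.mp (hA₂central η.2) b]

theorem surjective_mk_out_mul_out [A₂.Normal] (hA₂central : A₂ ≤ Subgroup.center B₂)
    {φ' : ↥((B₁ ⊓ A₂).subgroupOf A₂) →* A₂}
    (hφ' : ∀ (a : A₂) (h : (a : B₂) ∈ B₁),
      ((φ' ⟨a, Subgroup.mem_subgroupOf.mpr (Subgroup.mem_inf.mpr ⟨h, a.2⟩)⟩ : A₂) : B₂)
        = φ ⟨(a : B₂), h⟩)
    {φbar : ↥(B₁.map (QuotientGroup.mk' A₂)) →* B₂ ⧸ A₂}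
    (hφbar : ∀ b : B₁,
      φbar ⟨QuotientGroup.mk' A₂ (b : B₂), Subgroup.mem_map.mpr ⟨(b : B₂), b.2, rfl⟩⟩
        = QuotientGroup.mk' A₂ (φ b)) :
    Function.Surjective fun p : Quotient (twistedConj (B₁.map (QuotientGroup.mk' A₂)).subtype φbar)
        × Quotient (twistedConj ((B₁ ⊓ A₂).subgroupOf A₂).subtype φ') =>
      Quotient.mk (twistedConj B₁.subtype φ) (p.1.out.out * p.2.out) := by
  intro x
  induction x using Quotient.inductionOn with | h a => ?_
  set q := Quotient.mk (twistedConj (B₁.map (QuotientGroup.mk' A₂)).subtype φbar)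
    (a : B₂ ⧸ A₂)
  have hq : twistedConj (B₁.map (QuotientGroup.mk' A₂)).subtype φbar a q.out.out := by
    rw [QuotientGroup.out_eq']
    exact Setoid.symm' _ (Quotient.mk_out _)
  obtain ⟨c, hcA₂, hc⟩ := exists_twistedConj_mul_of_twistedConj_mk hA₂central hφbar hq
  have hc' := twistedConj_mul_left_of_twistedConj hA₂central hφ' q.out.out
    (Quotient.mk_out (s := twistedConj _ φ') ⟨c, hcA₂⟩)
  exact ⟨(q, Quotient.mk _ ⟨c, hcA₂⟩), Quotient.eq.mpr (Setoid.trans' _ hc' (Setoid.symm' _ hc))⟩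

end Central

end Reidemeister

theorem reidemeister_le_mul_of_central_general
    {B₂ : Type*} [Group B₂] (A₂ : Subgroup B₂) [A₂.Normal]
    (hA₂central : A₂ ≤ Subgroup.center B₂)
    (B₁ : Subgroup B₂)
    (φ : B₁ →* B₂)
    (φ' : ↥((B₁ ⊓ A₂).subgroupOf A₂) →* A₂)
    (hφ' : ∀ (a : A₂) (h : (a : B₂) ∈ B₁),
      ((φ' ⟨a, Subgroup.mem_subgroupOf.mpr (Subgroup.mem_inf.mpr ⟨h, a.2⟩)⟩ : A₂) : B₂)
        = φ ⟨(a : B₂), h⟩)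
    (φbar : ↥(B₁.map (QuotientGroup.mk' A₂)) →* B₂ ⧸ A₂)
    (hφbar : ∀ b : B₁,
      φbar ⟨QuotientGroup.mk' A₂ (b : B₂), Subgroup.mem_map.mpr ⟨(b : B₂), b.2, rfl⟩⟩
        = QuotientGroup.mk' A₂ (φ b)) :
    reidemeisterNumber B₁.subtype φ ≤
      reidemeisterNumber (B₁.map (QuotientGroup.mk' A₂)).subtype φbar *
        reidemeisterNumber ((B₁ ⊓ A₂).subgroupOf A₂).subtype φ' := by
  simp only [Reidemeister.reidemeisterNumber_eq_card]
  exact ENat.card_le_mul_of_surjective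
    (Reidemeister.surjective_mk_out_mul_out hA₂central hφ' hφbar)

/-- part (3) of Lemma 4.6 of the paper.
`A₂ ⊴ B₂` with `A₂ ≤ Z(B₂)`, `B₁ ≤_f B₂`, `A₁ = B₁ ∩ A₂ ≤_f A₂`; `φ : B₁ → B₂` satisfies
`φ(A₁) ⊆ A₂`, with restriction `φ' : A₁ → A₂` and induced homomorphism
`φ̄ : B₁A₂/A₂ → B₂/A₂`.  Then `R(φ) ≤ R(φ̄)·R(φ')` (in `ℕ∞`, where the product is `∞`
whenever a factor is `∞`). -/
theorem reidemeister_le_mul_of_central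
    {B₂ : Type*} [Group B₂] (A₂ : Subgroup B₂) [A₂.Normal]
    (hA₂central : A₂ ≤ Subgroup.center B₂)
    (B₁ : Subgroup B₂) [B₁.FiniteIndex]
    (hA₁fi : ((B₁ ⊓ A₂).subgroupOf A₂).FiniteIndex)
    (φ : B₁ →* B₂)
    (hφA : ∀ b : B₁, (b : B₂) ∈ A₂ → φ b ∈ A₂)
    (φ' : ↥((B₁ ⊓ A₂).subgroupOf A₂) →* A₂)
    (hφ' : ∀ (a : A₂) (h : (a : B₂) ∈ B₁),
      ((φ' ⟨a, Subgroup.mem_subgroupOf.mpr (Subgroup.mem_inf.mpr ⟨h, a.2⟩)⟩ : A₂) : B₂)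
        = φ ⟨(a : B₂), h⟩)
    (φbar : ↥(B₁.map (QuotientGroup.mk' A₂)) →* B₂ ⧸ A₂)
    (hφbar : ∀ b : B₁,
      φbar ⟨QuotientGroup.mk' A₂ (b : B₂), Subgroup.mem_map.mpr ⟨(b : B₂), b.2, rfl⟩⟩
        = QuotientGroup.mk' A₂ (φ b)) :
    reidemeisterNumber B₁.subtype φ ≤
      reidemeisterNumber (B₁.map (QuotientGroup.mk' A₂)).subtype φbar *
        reidemeisterNumber ((B₁ ⊓ A₂).subgroupOf A₂).subtype φ' :=
  reidemeister_le_mul_of_central_general A₂ hA₂central B₁ φ φ' hφ' φbar hφbar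
end

section
/- Let N be a finitely generated torsion-free nilpotent group of nilpotency class c, H a finite-index subgroup of N, and φ : H → N a homomorphism. If the fixed point set Fix(φ) = {h ∈ H : φ(h) = h} is infinite, then there exists an i ∈ {1,…,c} and a non-identity element x of H_i N_{i+1}/N_{i+1} with φ_i(x) = x (equivalently, φ_i has eigenvalue 1). -/
open Subgroup
open scoped commutatorElement

section Torsion

variable {G : Type*} [Group G]

lemma isOfFinOrder_of_mem_closure_of_subset_center {S : Set G} (hSc : S ⊆ center G)
    (hS : ∀ s ∈ S, IsOfFinOrder s) {x : G} (hx : x ∈ closure S) : IsOfFinOrder x := by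
  refine (closure_induction (p := fun x _ => x ∈ center G ∧ IsOfFinOrder x)
    (fun s hs => ⟨hSc hs, hS s hs⟩) ⟨one_mem _, IsOfFinOrder.one⟩ ?_ ?_ hx).2
  · rintro a b - - ⟨ha, hao⟩ ⟨hb, hbo⟩
    exact ⟨mul_mem ha hb, Commute.isOfFinOrder_mul (mem_center_iff.mp hb a) hao hbo⟩
  · rintro a - ⟨ha, hao⟩
    exact ⟨inv_mem ha, hao.inv⟩

lemma commutatorElement_pow_right {a : G} (ha : ∀ g, ⁅a, g⁆ ∈ center G) (g : G) (k : ℕ) :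
    ⁅a, g ^ k⁆ = ⁅a, g⁆ ^ k := by
  induction k with
  | zero => simp
  | succ k ih =>
    calc ⁅a, g ^ (k + 1)⁆ = ⁅a, g ^ k⁆ * (g ^ k * ⁅a, g⁆ * (g ^ k)⁻¹) := by
          simp only [commutatorElement_def]; group
      _ = ⁅a, g⁆ ^ (k + 1) := by
          rw [mem_center_iff.mp (ha g), mul_inv_cancel_right, ih, pow_succ]

lemma lowerCentralSeries_map_of_surjective {G' : Type*} [Group G'] {f : G →* G'}
    (hf : Function.Surjective f) (n : ℕ) :
    ((⊤ : Subgroup G).lowerCentralSeries n).map f = (⊤ : Subgroup G').lowerCentralSeries n := by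
  rw [map_lowerCentralSeries, map_top_of_surjective f hf]

theorem isMulTorsion_of_closure_eq_top_of_lowerCentralSeries_eq_bot {n : ℕ}
    (hn : (⊤ : Subgroup G).lowerCentralSeries (n + 1) = ⊥) {S : Set G}
    (hS : ∀ s ∈ S, IsOfFinOrder s) (hSG : closure S = ⊤) : IsMulTorsion G := by
  induction n generalizing G with
  | zero =>
    have hc : (⊤ : Subgroup G) ≤ center G := commutator_top_right_eq_bot_iff_le_center.mp hn
    exact fun x => isOfFinOrder_of_mem_closure_of_subset_center (fun s _ => hc (mem_top s)) hS
      (hSG ▸ mem_top x)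
  | succ n ih =>
    set D := (⊤ : Subgroup G).lowerCentralSeries (n + 1)
    have hD : D ≤ center G := commutator_top_right_eq_bot_iff_le_center.mp hn
    have hpow_mem (x : G) : ∃ k ≠ 0, x ^ k ∈ D := by
      have hQ : IsMulTorsion (G ⧸ D) := by
        refine ih (S := QuotientGroup.mk' D '' S) ?_ ?_ ?_
        · rw [← lowerCentralSeries_map_of_surjective (QuotientGroup.mk'_surjective D),
            Subgroup.map_eq_bot_iff, QuotientGroup.ker_mk']
        · rintro _ ⟨s, hs, rfl⟩
          exact (QuotientGroup.mk' D).isOfFinOrder (hS s hs)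
        · rw [← MonoidHom.map_closure, hSG,
            map_top_of_surjective _ (QuotientGroup.mk'_surjective D)]
      obtain ⟨k, hk, hxk⟩ := (hQ x).exists_pow_eq_one
      exact ⟨k, hk.ne', (QuotientGroup.eq_one_iff _).mp hxk⟩
    have hDtors {d : G} (hd : d ∈ D) : IsOfFinOrder d := by
      refine isOfFinOrder_of_mem_closure_of_subset_center ?_ ?_ hd
      · rintro _ ⟨p, hp, g, -, rfl⟩
        exact hD (commutator_mem_commutator hp (mem_top g))
      · rintro _ ⟨p, hp, g, -, rfl⟩
        obtain ⟨k, hk, hgk⟩ := hpow_mem g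
        refine isOfFinOrder_iff_pow_eq_one.mpr ⟨k, Nat.pos_of_ne_zero hk, ?_⟩
        rw [← commutatorElement_pow_right (fun h => hD (commutator_mem_commutator hp (mem_top h))),
          commutatorElement_eq_one_iff_commute]
        exact mem_center_iff.mp (hD hgk) p
    intro x
    obtain ⟨k, hk, hxk⟩ := hpow_mem x
    exact (hDtors hxk).of_pow hk

variable [Group.IsNilpotent G]

theorem IsOfFinOrder.mul_of_isNilpotent {a b : G} (ha : IsOfFinOrder a) (hb : IsOfFinOrder b) :
    IsOfFinOrder (a * b) := by
  set K := closure ({a, b} : Set G)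
  obtain ⟨n, hn⟩ :=
    Subgroup.nilpotent_iff_lowerCentralSeries.mp (inferInstance : Group.IsNilpotent K)
  have hn' : (⊤ : Subgroup K).lowerCentralSeries (n + 1) = ⊥ :=
    le_bot_iff.mp (hn ▸ Subgroup.lowerCentralSeries_antitone _ n.le_succ)
  have hgen : ∀ s ∈ K.subtype ⁻¹' {a, b}, IsOfFinOrder s := by
    rintro s (hs | hs) <;> rw [← Submonoid.isOfFinOrder_coe] <;> simp_all
  have hK := isMulTorsion_of_closure_eq_top_of_lowerCentralSeries_eq_bot hn' hgen
    (closure_preimage_eq_top _)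
  exact Submonoid.isOfFinOrder_coe.mpr
    (hK ⟨a * b, mul_mem (subset_closure (by simp)) (subset_closure (by simp))⟩)

variable (G) in
def nilpotentTorsion : Subgroup G where
  carrier := {x | IsOfFinOrder x}
  one_mem' := IsOfFinOrder.one
  mul_mem' := IsOfFinOrder.mul_of_isNilpotent
  inv_mem' := IsOfFinOrder.inv

instance : (nilpotentTorsion G).Normal :=
  ⟨fun _ hx g => (isConj_iff.mpr ⟨g, rfl⟩).isOfFinOrder hx⟩

lemma not_isOfFinOrder_quotient_nilpotentTorsion (q : G ⧸ nilpotentTorsion G) (hq : q ≠ 1) :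
    ¬IsOfFinOrder q := by
  obtain ⟨x, rfl⟩ := QuotientGroup.mk_surjective q
  intro hfin
  obtain ⟨k, hk, hxk⟩ := hfin.exists_pow_eq_one
  have hxk' : IsOfFinOrder (x ^ k) := (QuotientGroup.eq_one_iff _).mp hxk
  exact hq ((QuotientGroup.eq_one_iff x).mpr (hxk'.of_pow hk.ne'))

theorem Commute.of_pow_left_of_nilpotent (htf : ∀ g : G, g ≠ 1 → ¬IsOfFinOrder g) {n : ℕ}
    (hn : n ≠ 0) {x y : G} (h : Commute (x ^ n) y) : Commute x y := by
  obtain ⟨k, hk⟩ := Group.IsNilpotent.nilpotent G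
  have hy : y ∈ Subgroup.upperCentralSeries G k := hk ▸ mem_top y
  clear hk
  induction k generalizing y with
  | zero =>
    rw [Subgroup.upperCentralSeries_zero, mem_bot] at hy
    exact hy ▸ Commute.one_right x
  | succ k ih =>
    set u := y * x * y⁻¹
    have hu_pow : u ^ n = x ^ n := by rw [conj_pow, ← h.eq, mul_inv_cancel_right]
    have hw : x⁻¹ * u ∈ Subgroup.upperCentralSeries G k := by
      simpa [u, commutatorElement_def, mul_assoc] using
        inv_mem (Subgroup.mem_upperCentralSeries_succ_iff.mp hy x⁻¹)
    have hxu : Commute (x ^ n) u := hu_pow ▸ (Commute.self_pow u n).symm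
    have hxw : Commute x (x⁻¹ * u) :=
      ih ((Commute.self_pow x n).symm.inv_right.mul_right hxu) hw
    have hw_pow : (x⁻¹ * u) ^ n = 1 := by
      have := hxw.mul_pow n
      rwa [mul_inv_cancel_left, hu_pow, left_eq_mul] at this
    have hw_one : x⁻¹ * u = 1 := by
      by_contra hne
      exact htf _ hne (isOfFinOrder_iff_pow_eq_one.mpr ⟨n, Nat.pos_of_ne_zero hn, hw_pow⟩)
    exact (mul_inv_eq_iff_eq_mul.mp (inv_mul_eq_one.mp hw_one).symm).symm

end Torsion

theorem exists_pow_mem_lowerCentralSeries_of_normal {N : Type*} [Group N] [Group.IsNilpotent N]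
    (M : Subgroup N) [M.Normal] [M.FiniteIndex] {j : ℕ} {y : N}
    (hy : y ∈ (⊤ : Subgroup N).lowerCentralSeries j) :
    ∃ m ≠ 0, y ^ m ∈ M.lowerCentralSeries j := by
  induction j generalizing y with
  | zero => exact ⟨M.index, FiniteIndex.index_ne_zero, M.pow_index_mem y⟩
  | succ j ih =>
    set P := M.lowerCentralSeries (j + 1)
    let π : N →* (N ⧸ P) ⧸ nilpotentTorsion (N ⧸ P) :=
      (QuotientGroup.mk' _).comp (QuotientGroup.mk' P)
    have hP : P ≤ π.ker := fun x hx => by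
      simp [π, (QuotientGroup.eq_one_iff x).mpr hx]
    have htf := not_isOfFinOrder_quotient_nilpotentTorsion (G := N ⧸ P)
    have hker : (⊤ : Subgroup N).lowerCentralSeries (j + 1) ≤ π.ker := by
      refine commutator_le.mpr fun p hp q _ => ?_
      obtain ⟨a, ha, hpa⟩ := ih hp
      have hpow : Commute (π p ^ a) (π q ^ M.index) := by
        rw [← map_pow, ← map_pow, ← commutatorElement_eq_one_iff_commute, ← map_commutatorElement]
        exact hP (commutator_mem_commutator hpa (M.pow_index_mem q))
      rw [MonoidHom.mem_ker, map_commutatorElement, commutatorElement_eq_one_iff_commute]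
      exact ((Commute.of_pow_left_of_nilpotent htf ha hpow).symm.of_pow_left_of_nilpotent htf
        FiniteIndex.index_ne_zero).symm
    obtain ⟨k, hk, hyk⟩ := ((QuotientGroup.eq_one_iff _).mp (hker hy)).exists_pow_eq_one
    exact ⟨k, hk.ne', (QuotientGroup.eq_one_iff _).mp (by rwa [QuotientGroup.mk_pow])⟩

theorem exists_pow_mem_lowerCentralSeries {N : Type*} [Group N] [Group.IsNilpotent N]
    (H : Subgroup N) [H.FiniteIndex] {j : ℕ} {y : N}
    (hy : y ∈ (⊤ : Subgroup N).lowerCentralSeries j) :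
    ∃ m ≠ 0, y ^ m ∈ H.lowerCentralSeries j :=
  let ⟨m, hm, hym⟩ := exists_pow_mem_lowerCentralSeries_of_normal H.normalCore hy
  ⟨m, hm, lowerCentralSeries_mono j H.normalCore_le hym⟩

lemma Nat.exists_le_and_not_succ_of_one {P : ℕ → Prop} {c : ℕ} (h1 : P 1) (hc : ¬P (c + 1)) :
    ∃ i, 1 ≤ i ∧ i ≤ c ∧ P i ∧ ¬P (i + 1) := by
  induction c with
  | zero => exact absurd h1 hc
  | succ c ih =>
    by_cases hP : P (c + 1)
    · exact ⟨c + 1, by omega, le_rfl, hP, hc⟩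
    · obtain ⟨i, h1i, hic, hi, hi'⟩ := ih hP
      exact ⟨i, h1i, hic.trans c.le_succ, hi, hi'⟩

section Isolator

variable {N : Type*} [Group N]

lemma mem_isolatorLCS_one (x : N) : x ∈ isolatorLCS N 1 :=
  ⟨1, le_rfl, by simp⟩

lemma notMem_isolatorLCS_nilpotencyClass_succ [Group.IsNilpotent N]
    (htf : ∀ g : N, g ≠ 1 → ¬IsOfFinOrder g) {x : N} (hx : x ≠ 1) :
    x ∉ isolatorLCS N (Group.nilpotencyClass N + 1) := by
  rintro ⟨m, hm, hxm⟩
  rw [Nat.add_sub_cancel, Subgroup.lowerCentralSeries_nilpotencyClass, mem_bot] at hxm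
  exact htf x hx (isOfFinOrder_iff_pow_eq_one.mpr ⟨m, hm, hxm⟩)

lemma mem_isolatorLCSSubgroup_of_mem_isolatorLCS [Group.IsNilpotent N] {H : Subgroup N}
    [H.FiniteIndex] {j : ℕ} {x : N} (hxH : x ∈ H) (hx : x ∈ isolatorLCS N j) :
    x ∈ isolatorLCSSubgroup H j := by
  obtain ⟨m, hm, hxm⟩ := hx
  obtain ⟨k, hk, hxmk⟩ := exists_pow_mem_lowerCentralSeries H hxm
  rw [← top_subtype_lowerCentralSeries] at hxmk
  obtain ⟨z, hz, hzx⟩ := hxmk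
  refine ⟨hxH, m * k, Nat.one_le_iff_ne_zero.mpr (mul_ne_zero (by omega) hk), ?_⟩
  have hxz : (⟨x, hxH⟩ : H) ^ (m * k) = z :=
    Subtype.ext (by rw [SubgroupClass.coe_pow, pow_mul]; exact hzx.symm)
  exact hxz ▸ hz

end Isolator

theorem eigenvalue_one_of_infinite_fixed_points_general
    {N : Type*} [Group N] [Group.IsNilpotent N]
    (htf : ∀ g : N, g ≠ 1 → ¬IsOfFinOrder g)
    (c : ℕ) (hc : Group.nilpotencyClass N = c)
    (H : Subgroup N) [H.FiniteIndex] (φ : H →* N)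
    (Ni Hi : ℕ → Subgroup N)
    (hNi : ∀ j, (Ni j : Set N) = isolatorLCS N j)
    (hHi : ∀ j, (Hi j : Set N) = isolatorLCSSubgroup H j)
    [∀ j, (Ni j).Normal]
    (φi : ∀ j, ↥((Hi j).map (QuotientGroup.mk' (Ni (j + 1)))) →*
        ↥((Ni j).map (QuotientGroup.mk' (Ni (j + 1)))))
    (hφi : ∀ (j : ℕ) (h : H) (hh : (h : N) ∈ Hi j),
      ((φi j ⟨QuotientGroup.mk' (Ni (j + 1)) (h : N),
          Subgroup.mem_map.mpr ⟨(h : N), hh, rfl⟩⟩ :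
        ↥((Ni j).map (QuotientGroup.mk' (Ni (j + 1))))) : N ⧸ Ni (j + 1))
        = QuotientGroup.mk' (Ni (j + 1)) (φ h))
    (hFixInf : {h : H | φ h = (h : N)}.Infinite) :
    ∃ i, 1 ≤ i ∧ i ≤ c ∧
      ∃ x : ↥((Hi i).map (QuotientGroup.mk' (Ni (i + 1)))), x ≠ 1 ∧
        ((φi i x : ↥((Ni i).map (QuotientGroup.mk' (Ni (i + 1))))) : N ⧸ Ni (i + 1))
          = (x : N ⧸ Ni (i + 1)) := by
  obtain ⟨g, hg_fix, hg_ne⟩ := hFixInf.exists_notMem_finset {1}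
  have hg : (g : N) ≠ 1 := by simpa using hg_ne
  have memNi (j : ℕ) (x : N) : x ∈ Ni j ↔ x ∈ isolatorLCS N j := Set.ext_iff.mp (hNi j) x
  obtain ⟨i, hi1, hic, hgi, hgi'⟩ :=
    Nat.exists_le_and_not_succ_of_one (P := fun j => (g : N) ∈ Ni j)
      ((memNi 1 g).mpr (mem_isolatorLCS_one _))
      (hc ▸ mt (memNi _ g).mp (notMem_isolatorLCS_nilpotencyClass_succ htf hg))
  have hgHi : (g : N) ∈ Hi i := (Set.ext_iff.mp (hHi i) g).mpr
    (mem_isolatorLCSSubgroup_of_mem_isolatorLCS g.2 ((memNi i g).mp hgi))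
  refine ⟨i, hi1, hic, ⟨QuotientGroup.mk' _ g, mem_map_of_mem _ hgHi⟩, fun h1 => hgi' ?_, ?_⟩
  · exact (QuotientGroup.eq_one_iff _).mp (congrArg Subtype.val h1)
  · exact (hφi i g hgHi).trans (congrArg _ hg_fix)

/-- Lemma 4.7 of the paper.
Let `N` be a finitely generated torsion-free nilpotent group of class `c`, `H ≤_f N` and
`φ : H → N` a homomorphism, with induced homomorphisms
`φ_i : H_i N_{i+1}/N_{i+1} → N_i/N_{i+1}`.  If `Fix(φ) = {h ∈ H : φ(h) = h}` is infinite,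
then for some `i ∈ {1,…,c}` the morphism `φ_i` has a non-identity fixed point
(i.e. `φ_i` has eigenvalue `1`). -/
theorem eigenvalue_one_of_infinite_fixed_points
    {N : Type*} [Group N] [Group.IsNilpotent N]
    (hfg : Group.FG N) (htf : ∀ g : N, g ≠ 1 → ¬IsOfFinOrder g)
    (c : ℕ) (hc : Group.nilpotencyClass N = c)
    (H : Subgroup N) [H.FiniteIndex] (φ : H →* N)
    (Ni Hi : ℕ → Subgroup N)
    (hNi : ∀ j, (Ni j : Set N) = isolatorLCS N j)
    (hHi : ∀ j, (Hi j : Set N) = isolatorLCSSubgroup H j)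
    [∀ j, (Ni j).Normal]
    (φi : ∀ j, ↥((Hi j).map (QuotientGroup.mk' (Ni (j + 1)))) →*
        ↥((Ni j).map (QuotientGroup.mk' (Ni (j + 1)))))
    (hφi : ∀ (j : ℕ) (h : H) (hh : (h : N) ∈ Hi j),
      ((φi j ⟨QuotientGroup.mk' (Ni (j + 1)) (h : N),
          Subgroup.mem_map.mpr ⟨(h : N), hh, rfl⟩⟩ :
        ↥((Ni j).map (QuotientGroup.mk' (Ni (j + 1))))) : N ⧸ Ni (j + 1))
        = QuotientGroup.mk' (Ni (j + 1)) (φ h))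
    (hFixInf : {h : H | φ h = (h : N)}.Infinite) :
    ∃ i, 1 ≤ i ∧ i ≤ c ∧
      ∃ x : ↥((Hi i).map (QuotientGroup.mk' (Ni (i + 1)))), x ≠ 1 ∧
        ((φi i x : ↥((Ni i).map (QuotientGroup.mk' (Ni (i + 1))))) : N ⧸ Ni (i + 1))
          = (x : N ⧸ Ni (i + 1)) :=
  eigenvalue_one_of_infinite_fixed_points_general htf c hc H φ Ni Hi hNi hHi φi hφi hFixInf
end

section
/- Let G be a group, φ : G → G a group endomorphism, and Z a subgroup of the center Z(G) with φ(Z) ⊆ Z. Define ψ : G → G by ψ(x) = φ(x)·x⁻¹, let ψ' : Z → Z be its restriction to Z, and let ψ̄ : G/Z → G/Z be the induced map x·Z ↦ φ(x)·x⁻¹·Z (well defined since φ(Z) ⊆ Z). If ψ' and ψ̄ are both bijective, then ψ is bijective. -/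
/-- inductive step in the proof of Lemma 6.5 of the paper.
Let `G` be a group, `φ : G → G` a group endomorphism, and `Z` a subgroup of the center of `G`
with `φ(Z) ⊆ Z`.  Define `ψ : G → G` by `ψ(x) = φ(x)·x⁻¹`, let `ψ' : Z → Z` be its restriction
to `Z`, and let `ψ̄ : G/Z → G/Z` be the induced map `x·Z ↦ φ(x)·x⁻¹·Z`.  If `ψ'` and `ψ̄` are
both bijective, then `ψ` is bijective. -/
theorem bijective_phi_mul_inv_of_center_quotient
    {G : Type*} [Group G] (φ : G →* G) (Z : Subgroup G)
    (hZcentral : Z ≤ Subgroup.center G)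
    (hZinv : ∀ z : G, z ∈ Z → φ z ∈ Z)
    (ψ' : Z → Z)
    (hψ' : ∀ z : Z, (ψ' z : G) = φ (z : G) * (z : G)⁻¹)
    (ψbar : (G ⧸ Z) → (G ⧸ Z))
    (hψbar : ∀ x : G, ψbar (QuotientGroup.mk x) = QuotientGroup.mk (φ x * x⁻¹))
    (hbij' : Function.Bijective ψ')
    (hbijbar : Function.Bijective ψbar) :
    Function.Bijective (fun x : G => φ x * x⁻¹) := by
  have key : ∀ (x : G) (z : Z),
      φ (x * (z : G)) * (x * (z : G))⁻¹ = φ x * x⁻¹ * (φ (z : G) * (z : G)⁻¹) := by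
    intro x z
    have hc : ∀ a : G, a * φ (z : G) = φ (z : G) * a := fun a =>
      Subgroup.mem_center_iff.mp (hZcentral (hZinv z z.2)) a
    have hd : ∀ a : G, a * (z : G)⁻¹ = (z : G)⁻¹ * a := fun a =>
      Subgroup.mem_center_iff.mp (inv_mem (hZcentral z.2)) a
    calc φ (x * (z : G)) * (x * (z : G))⁻¹
        = φ x * (φ (z : G) * ((z : G)⁻¹ * x⁻¹)) := by
          rw [map_mul, mul_inv_rev, mul_assoc]
      _ = φ x * (x⁻¹ * (φ (z : G) * (z : G)⁻¹)) := by
          rw [← hd x⁻¹, ← mul_assoc (φ (z : G)), ← hc x⁻¹, mul_assoc]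
      _ = φ x * x⁻¹ * (φ (z : G) * (z : G)⁻¹) := by rw [mul_assoc]
  have hψ'one : ψ' 1 = 1 := by
    apply Subtype.ext
    rw [hψ']
    simp
  constructor
  · intro x y hxy
    simp only at hxy
    have hq : ψbar (QuotientGroup.mk x) = ψbar (QuotientGroup.mk y) := by
      rw [hψbar, hψbar, hxy]
    have hxyq : x⁻¹ * y ∈ Z := (QuotientGroup.eq).mp (hbijbar.1 hq)
    set z : Z := ⟨x⁻¹ * y, hxyq⟩ with hz
    have hy : y = x * (z : G) := by simp [hz]
    rw [hy, key] at hxy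
    have hcalc := hxy
    have hz1 : φ (z : G) * (z : G)⁻¹ = 1 :=
      mul_left_cancel (a := φ x * x⁻¹) (by rw [← hcalc, mul_one])
    have hz0 : z = 1 := hbij'.1 (by
      apply Subtype.ext
      rw [hψ', hψ'one, hz1, OneMemClass.coe_one])
    have hxy1 : x⁻¹ * y = 1 := by
      have := congrArg (Subtype.val) hz0
      simpa [hz] using this
    rw [inv_mul_eq_one] at hxy1
    exact hxy1
  · intro g
    obtain ⟨q, hq⟩ := hbijbar.2 (QuotientGroup.mk g)
    obtain ⟨x, rfl⟩ := QuotientGroup.mk_surjective q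
    rw [hψbar, QuotientGroup.eq] at hq
    obtain ⟨z, hzeq⟩ := hbij'.2 ⟨_, hq⟩
    have hzeqG : φ (z : G) * (z : G)⁻¹ = (φ x * x⁻¹)⁻¹ * g := by
      rw [← hψ' z, hzeq]
    refine ⟨x * (z : G), ?_⟩
    simp only
    rw [key, hzeqG, mul_inv_cancel_left]
end
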